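/- The successor function on φ-rows preserves the equivalence ∼: if row ∼ row′ and A is any atom, then succ(row, A) ∼ succ(row′, A). -/

import Mathlib

structure Atom (α β : Type) where
  req : Finset α
  prop : Finset β
deriving DecidableEq

def gen {α β : Type} [DecidableEq α] [DecidableEq β]
    (Obs : Atom α β → Finset α) (A B : Atom α β) : Atom α β :=
  ⟨A.req ∪ B.req ∪ Obs A ∪ Obs B, A.prop ∩ B.prop⟩

def succ {α β : Type} [DecidableEq α] [DecidableEq β]
    (Obs : Atom α β → Finset α) : List (Atom α β) → Atom α β → List (Atom α β)
  | [], A => [A]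
  | r :: rs, A => A :: succ Obs rs (gen Obs r A)

def rank {α β : Type} (REQ : Finset α) (A : Atom α β) : ℕ :=
  REQ.card - A.req.card

def rle {α β : Type} [DecidableEq α] [DecidableEq β] :
    List (Atom α β) → List (Atom α β × ℕ)
  | [] => []
  | a :: l =>
    match rle l with
    | [] => [(a, 1)]
    | (b, m) :: t => if a = b then (b, m + 1) :: t else (a, 1) :: (b, m) :: t

def BlockEquiv {α β : Type} (REQ : Finset α) (b b' : Atom α β × ℕ) : Prop :=
  b.1 = b'.1 ∧ (b.2 = b'.2 ∨ (rank REQ b.1 < b.2 ∧ rank REQ b.1 < b'.2))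

def REquiv {α β : Type} [DecidableEq α] [DecidableEq β]
    (REQ : Finset α) (w w' : List (Atom α β)) : Prop :=
  List.Forall₂ (BlockEquiv REQ) (rle w) (rle w')


/-! Along a block `X^m` of a row, the successor visits the iterates of `B ↦ gen(X, B)` starting
at `A`. After one step `Prop(B) ⊆ Prop(X)`, so each further step either fixes `B` or strictly
enlarges `Req(B)` inside `REQ`, lowering its rank. Hence the iteration becomes stationary at some
`C` after `N` steps with `N + rank C ≤ rank X + 1`. Two blocks `X^m`, `X^m'` with `m, m' > rank X`
therefore produce the same first `N` entries followed by `C`-blocks that both exceed `rank C`;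
blocks of equal multiplicity produce identical prefixes, and the rest follows by induction over
the factorization. -/

open Function

theorem exists_isFixedPt_iterate_add_le {γ : Type*} {f : γ → γ} {μ : γ → ℕ} {p : γ → Prop}
    (hp : ∀ b, p b → p (f b)) (hμ : ∀ b, p b → f b ≠ b → μ (f b) < μ b) (b : γ) (hb : p b) :
    ∃ n, IsFixedPt f (f^[n] b) ∧ n + μ (f^[n] b) ≤ μ b := by
  by_cases hfix : f b = b
  · exact ⟨0, hfix, by simp⟩
  obtain ⟨n, hn, hle⟩ := exists_isFixedPt_iterate_add_le hp hμ (f b) (hp b hb)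
  have hlt := hμ b hb hfix
  exact ⟨n + 1, by rwa [iterate_succ_apply], by rw [iterate_succ_apply]; omega⟩
termination_by μ b
decreasing_by exact hμ b hb hfix

variable {α β : Type} [DecidableEq α] [DecidableEq β]

section Gen

variable {REQ : Finset α} {Obs : Atom α β → Finset α} {X A B : Atom α β}

theorem req_subset_gen_req_right : B.req ⊆ (gen Obs X B).req := by
  intro a ha
  simp [gen, ha]

theorem req_subset_gen_req_left : X.req ⊆ (gen Obs X B).req := by
  intro a ha
  simp [gen, ha]

theorem gen_prop_subset_left : (gen Obs X B).prop ⊆ X.prop :=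
  Finset.inter_subset_left

theorem gen_req_subset (hObs : ∀ Y, Obs Y ⊆ REQ) (hX : X.req ⊆ REQ) (hB : B.req ⊆ REQ) :
    (gen Obs X B).req ⊆ REQ :=
  Finset.union_subset (Finset.union_subset (Finset.union_subset hX hB) (hObs X)) (hObs B)

theorem rank_gen_lt (hB : B.prop ⊆ X.prop) (hsub : (gen Obs X B).req ⊆ REQ)
    (hne : gen Obs X B ≠ B) : rank REQ (gen Obs X B) < rank REQ B := by
  have hss : B.req ⊂ (gen Obs X B).req := by
    refine ⟨req_subset_gen_req_right, fun hle => hne ?_⟩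
    exact congrArg₂ Atom.mk (le_antisymm hle req_subset_gen_req_right)
      (Finset.inter_eq_right.mpr hB)
  have hlt := Finset.card_lt_card hss
  have hle := Finset.card_le_card hsub
  unfold rank
  omega

theorem gen_iterate_req_subset (hObs : ∀ Y, Obs Y ⊆ REQ) (hX : X.req ⊆ REQ)
    (hA : A.req ⊆ REQ) (k : ℕ) : ((gen Obs X)^[k] A).req ⊆ REQ := by
  induction k with
  | zero => exact hA
  | succ k ih =>
    rw [iterate_succ_apply']
    exact gen_req_subset hObs hX ih

theorem exists_isFixedPt_gen_iterate (hObs : ∀ Y, Obs Y ⊆ REQ) (hX : X.req ⊆ REQ)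
    (hA : A.req ⊆ REQ) :
    ∃ N, IsFixedPt (gen Obs X) ((gen Obs X)^[N] A) ∧
      N + rank REQ ((gen Obs X)^[N] A) ≤ rank REQ X + 1 := by
  obtain ⟨n, hfix, hle⟩ := exists_isFixedPt_iterate_add_le (f := gen Obs X) (μ := rank REQ)
    (p := fun B => B.prop ⊆ X.prop ∧ B.req ⊆ REQ)
    (fun B hB => ⟨gen_prop_subset_left, gen_req_subset hObs hX hB.2⟩)
    (fun B hB => rank_gen_lt hB.1 (gen_req_subset hObs hX hB.2))
    (gen Obs X A) ⟨gen_prop_subset_left, gen_req_subset hObs hX hA⟩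
  have hrank : rank REQ (gen Obs X A) ≤ rank REQ X :=
    Nat.sub_le_sub_left (Finset.card_le_card req_subset_gen_req_left) _
  refine ⟨n + 1, ?_, ?_⟩ <;> rw [iterate_succ_apply]
  · exact hfix
  · omega

end Gen

section Succ

variable (Obs : Atom α β → Finset α)

theorem head?_succ (l : List (Atom α β)) (A : Atom α β) : (succ Obs l A).head? = some A := by
  cases l <;> rfl

theorem succ_replicate_append (X : Atom α β) (rest : List (Atom α β)) (n : ℕ) (A : Atom α β) :
    succ Obs (List.replicate n X ++ rest) A =
      List.iterate (gen Obs X) A n ++ succ Obs rest ((gen Obs X)^[n] A) := by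
  induction n generalizing A with
  | zero => rfl
  | succ n ih =>
    rw [List.replicate_succ, List.cons_append, succ, ih, iterate_succ_apply]
    rfl

theorem succ_replicate_append_of_isFixedPt {X C : Atom α β} (hC : IsFixedPt (gen Obs X) C)
    (rest : List (Atom α β)) (d : ℕ) :
    succ Obs (List.replicate d X ++ rest) C = List.replicate d C ++ succ Obs rest C := by
  induction d with
  | zero => rfl
  | succ d ih =>
    rw [List.replicate_succ, List.cons_append, succ, hC.eq, ih]
    rfl

end Succ

section Rle

theorem rle_eq_nil {l : List (Atom α β)} (h : rle l = []) : l = [] := by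
  cases l with
  | nil => rfl
  | cons a t =>
    simp only [rle] at h
    split at h
    · simp at h
    · split_ifs at h

theorem exists_rle_cons (x : Atom α β) (v : List (Atom α β)) :
    ∃ k t, rle (x :: v) = (x, k + 1) :: t := by
  simp only [rle]
  rcases rle v with _ | ⟨⟨b, m⟩, s⟩
  · exact ⟨0, [], rfl⟩
  · by_cases hxb : x = b
    · subst hxb
      exact ⟨m, s, by simp⟩
    · exact ⟨0, (b, m) :: s, by simp [hxb]⟩

theorem eq_replicate_append_of_rle_eq_cons {l : List (Atom α β)} {X : Atom α β} {m : ℕ}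
    {t : List (Atom α β × ℕ)} (h : rle l = (X, m) :: t) :
    0 < m ∧ ∃ l₂, l = List.replicate m X ++ l₂ ∧ rle l₂ = t := by
  induction l generalizing X m t with
  | nil => simp [rle] at h
  | cons x v ih =>
    simp only [rle] at h
    rcases hv : rle v with _ | ⟨⟨b, k⟩, s⟩ <;> rw [hv] at h
    · obtain ⟨⟨rfl, rfl⟩, rfl⟩ := by simpa using h
      exact ⟨Nat.one_pos, [], by simp [rle_eq_nil hv], rfl⟩
    · by_cases hxb : x = b
      · subst hxb
        obtain ⟨⟨rfl, rfl⟩, rfl⟩ := by simpa using h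
        obtain ⟨-, l₂, rfl, hl₂⟩ := ih hv
        exact ⟨Nat.succ_pos k, l₂, by simp [List.replicate_succ], hl₂⟩
      · obtain ⟨⟨rfl, rfl⟩, rfl⟩ := by simpa [hxb] using h
        exact ⟨Nat.one_pos, v, by simp, hv⟩

theorem rle_replicate_append {C : Atom α β} {w : List (Atom α β)} {e : ℕ}
    {t : List (Atom α β × ℕ)} (h : rle w = (C, e) :: t) (d : ℕ) :
    rle (List.replicate d C ++ w) = (C, d + e) :: t := by
  induction d with
  | zero => simpa using h
  | succ n ih =>
    rw [List.replicate_succ, List.cons_append]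
    simp [rle, ih, Nat.add_right_comm]

end Rle

namespace REquiv

variable {REQ : Finset α}

theorem refl (w : List (Atom α β)) : REquiv REQ w w :=
  List.forall₂_same.mpr fun _ _ => ⟨rfl, Or.inl rfl⟩

theorem cons {w w' : List (Atom α β)} (x : Atom α β) (h : REquiv REQ w w') :
    REquiv REQ (x :: w) (x :: w') := by
  unfold REquiv at *
  rcases hw : rle w with _ | ⟨⟨b, m⟩, t⟩ <;> rw [hw] at h
  · simp only [rle, hw, List.forall₂_nil_left_iff.mp h]
    exact .cons ⟨rfl, Or.inl rfl⟩ .nil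
  · obtain ⟨⟨b', m'⟩, t', ⟨rfl, hmm⟩, ht, hw'⟩ := List.forall₂_cons_left_iff.mp h
    simp only [rle, hw, hw']
    by_cases hxb : x = b
    · subst hxb
      simp only [↓reduceIte]
      refine .cons ⟨rfl, ?_⟩ ht
      dsimp only at hmm ⊢
      omega
    · simp only [if_neg hxb]
      exact .cons ⟨rfl, Or.inl rfl⟩ (.cons ⟨rfl, hmm⟩ ht)

theorem append_left {w w' : List (Atom α β)} (P : List (Atom α β)) (h : REquiv REQ w w') :
    REquiv REQ (P ++ w) (P ++ w') := by
  induction P with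
  | nil => exact h
  | cons x P ih => exact ih.cons x

theorem replicate_append {C : Atom α β} {w w' : List (Atom α β)} {d d' : ℕ}
    (h : REquiv REQ w w') (hw : w.head? = some C) (hw' : w'.head? = some C)
    (hd : rank REQ C ≤ d) (hd' : rank REQ C ≤ d') :
    REquiv REQ (List.replicate d C ++ w) (List.replicate d' C ++ w') := by
  obtain ⟨v, rfl⟩ := List.head?_eq_some_iff.mp hw
  obtain ⟨v', rfl⟩ := List.head?_eq_some_iff.mp hw'
  obtain ⟨e, s, hs⟩ := exists_rle_cons C v
  obtain ⟨e', s', hs'⟩ := exists_rle_cons C v'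
  unfold REquiv at h ⊢
  rw [hs, hs'] at h
  rw [rle_replicate_append hs, rle_replicate_append hs']
  exact .cons ⟨rfl, Or.inr ⟨by dsimp only; omega, by dsimp only; omega⟩⟩ (List.forall₂_cons.mp h).2

end REquiv

section Main

variable {REQ : Finset α} {Obs : Atom α β → Finset α}

theorem requiv_succ_replicate_append (hObs : ∀ Y, Obs Y ⊆ REQ) {X A : Atom α β}
    (hX : X.req ⊆ REQ) (hA : A.req ⊆ REQ) {r r' : List (Atom α β)} {m m' : ℕ}
    (hm : m = m' ∨ rank REQ X < m ∧ rank REQ X < m')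
    (ih : ∀ B : Atom α β, B.req ⊆ REQ → REquiv REQ (succ Obs r B) (succ Obs r' B)) :
    REquiv REQ (succ Obs (List.replicate m X ++ r) A) (succ Obs (List.replicate m' X ++ r') A) := by
  rcases hm with rfl | ⟨hm, hm'⟩
  · rw [succ_replicate_append, succ_replicate_append]
    exact (ih _ (gen_iterate_req_subset hObs hX hA m)).append_left _
  obtain ⟨N, hfix, hN⟩ := exists_isFixedPt_gen_iterate hObs hX hA
  obtain ⟨d, rfl⟩ : ∃ d, m = N + d := ⟨m - N, by omega⟩
  obtain ⟨d', rfl⟩ : ∃ d', m' = N + d' := ⟨m' - N, by omega⟩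
  simp only [List.replicate_add, List.append_assoc, succ_replicate_append,
    succ_replicate_append_of_isFixedPt Obs hfix]
  refine REquiv.append_left _ (REquiv.replicate_append ?_ (head?_succ ..) (head?_succ ..)
    (by omega) (by omega))
  exact ih _ (gen_iterate_req_subset hObs hX hA N)

theorem requiv_succ_of_forall₂_rle (hObs : ∀ Y, Obs Y ⊆ REQ) {t t' : List (Atom α β × ℕ)}
    (h : List.Forall₂ (BlockEquiv REQ) t t') :
    ∀ {r r' : List (Atom α β)} {A : Atom α β}, rle r = t → rle r' = t' → A.req ⊆ REQ →
      (∀ X ∈ r, X.req ⊆ REQ) → REquiv REQ (succ Obs r A) (succ Obs r' A) := by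
  induction h with
  | nil =>
    intro r r' A hr hr' _ _
    rw [rle_eq_nil hr, rle_eq_nil hr']
    exact REquiv.refl _
  | @cons b b' t t' hb _ ih =>
    intro r r' A hr hr' hA hrsub
    obtain ⟨X, m⟩ := b
    obtain ⟨X', m'⟩ := b'
    obtain ⟨rfl, hm⟩ := hb
    obtain ⟨hpos, r₂, rfl, hr₂⟩ := eq_replicate_append_of_rle_eq_cons hr
    obtain ⟨-, r₂', rfl, hr₂'⟩ := eq_replicate_append_of_rle_eq_cons hr'
    have hX : X.req ⊆ REQ := hrsub X (by simp [hpos.ne'])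
    exact requiv_succ_replicate_append hObs hX hA hm fun B hB =>
      ih hr₂ hr₂' hB fun Y hY => hrsub Y (List.mem_append_right _ hY)

end Main

theorem succ_preserves_equiv_general {α β : Type} [DecidableEq α] [DecidableEq β]
    (REQ : Finset α) (Obs : Atom α β → Finset α) (hObs : ∀ X, Obs X ⊆ REQ)
    (r r' : List (Atom α β)) (A : Atom α β) (hA : A.req ⊆ REQ)
    (hrsub : ∀ X ∈ r, X.req ⊆ REQ)
    (h : REquiv REQ r r') :
    REquiv REQ (succ Obs r A) (succ Obs r' A) :=
  requiv_succ_of_forall₂_rle hObs h rfl rfl hA hrsub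

/-- The successor function preserves the equivalence ∼ of φ-rows. -/
theorem succ_preserves_equiv {α β : Type} [DecidableEq α] [DecidableEq β]
    (REQ : Finset α) (Obs : Atom α β → Finset α) (hObs : ∀ X, Obs X ⊆ REQ)
    (r r' : List (Atom α β)) (A : Atom α β) (hA : A.req ⊆ REQ)
    (hrsub : ∀ X ∈ r, X.req ⊆ REQ) (hr'sub : ∀ X ∈ r', X.req ⊆ REQ)
    (hrow : List.Chain' (fun X Y => X.req ⊆ Y.req ∧ Obs X ⊆ Y.req ∧ Y.prop ⊆ X.prop) r)
    (hrow' : List.Chain' (fun X Y => X.req ⊆ Y.req ∧ Obs X ⊆ Y.req ∧ Y.prop ⊆ X.prop) r')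
    (h : REquiv REQ r r') :
    REquiv REQ (succ Obs r A) (succ Obs r' A) :=
  succ_preserves_equiv_general REQ Obs hObs r r' A hA hrsub h
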